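/- Let r = 8 and let ι be a ℚ-linear isometry of H_8 ⊗ ℚ with ι(h_i) = σ h_i + L for 1 ≤ i ≤ 8 and ι(h_0) = σ h_0 + 4L, for some σ ∈ {1,-1} and L ∈ H_8 ⊗ ℚ. Then L = 0. -/
import Mathlib

open Finset

def B (r : ℕ) (x y : Fin (r + 1) → ℚ) : ℚ :=
  3 * x 0 * y 0 - ∑ i, x i * y i

def h (r : ℕ) (i : Fin (r + 1)) : Fin (r + 1) → ℚ := Pi.single i 1

set_option maxHeartbeats 1000000 in
theorem L_zero_for_r_eight
    (ι : (Fin 9 → ℚ) ≃ₗ[ℚ] (Fin 9 → ℚ))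
    (hiso : ∀ x y, B 8 (ι x) (ι y) = B 8 x y)
    (σ : ℚ) (hσ : σ = 1 ∨ σ = -1) (L : Fin 9 → ℚ)
    (hi : ∀ i : Fin 9, i ≠ 0 → ι (h 8 i) = σ • h 8 i + L)
    (h0 : ι (h 8 0) = σ • h 8 0 + (4 : ℚ) • L) :
    L = 0 := by
  have e1 := hiso (h 8 1) (h 8 1)
  have e2 := hiso (h 8 2) (h 8 2)
  have e3 := hiso (h 8 3) (h 8 3)
  have e4 := hiso (h 8 4) (h 8 4)
  have e5 := hiso (h 8 5) (h 8 5)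
  have e6 := hiso (h 8 6) (h 8 6)
  have e7 := hiso (h 8 7) (h 8 7)
  have e8 := hiso (h 8 8) (h 8 8)
  have e01 := hiso (h 8 0) (h 8 1)
  rw [hi 1 (by decide)] at e1 e01
  rw [hi 2 (by decide)] at e2
  rw [hi 3 (by decide)] at e3
  rw [hi 4 (by decide)] at e4
  rw [hi 5 (by decide)] at e5
  rw [hi 6 (by decide)] at e6
  rw [hi 7 (by decide)] at e7
  rw [hi 8 (by decide)] at e8
  rw [h0] at e01
  have r1 : (Fin.succ 0 : Fin 9) = 1 := rfl
  have r2 : ((Fin.succ 0).succ : Fin 9) = 2 := rfl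
  have r3 : ((Fin.succ 0).succ.succ : Fin 9) = 3 := rfl
  have r4 : ((Fin.succ 0).succ.succ.succ : Fin 9) = 4 := rfl
  have r5 : ((Fin.succ 0).succ.succ.succ.succ : Fin 9) = 5 := rfl
  have r6 : ((Fin.succ 0).succ.succ.succ.succ.succ : Fin 9) = 6 := rfl
  have r7 : ((Fin.succ 0).succ.succ.succ.succ.succ.succ : Fin 9) = 7 := rfl
  have r8 : ((Fin.succ 0).succ.succ.succ.succ.succ.succ.succ : Fin 9) = 8 := rfl
  simp (config := { decide := true }) only [B, h, Fin.sum_univ_succ, Fin.sum_univ_zero,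
    Pi.add_apply, Pi.smul_apply, Pi.single_apply, smul_eq_mul, add_zero, zero_add,
    if_true, if_false, r1, r2, r3, r4, r5, r6, r7, r8, mul_zero, mul_one,
    zero_mul, one_mul] at e1 e2 e3 e4 e5 e6 e7 e8 e01
  rcases hσ with rfl | rfl <;>
  · ring_nf at e1 e2 e3 e4 e5 e6 e7 e8 e01
    have q2 : L 2 = L 1 := by linarith [e1, e2]
    have q3 : L 3 = L 1 := by linarith [e1, e3]
    have q4 : L 4 = L 1 := by linarith [e1, e4]
    have q5 : L 5 = L 1 := by linarith [e1, e5]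
    have q6 : L 6 = L 1 := by linarith [e1, e6]
    have q7 : L 7 = L 1 := by linarith [e1, e7]
    have q8 : L 8 = L 1 := by linarith [e1, e8]
    have q0 : L 0 = -2 * L 1 := by linarith [e1, e01]
    rw [q0, q2, q3, q4, q5, q6, q7, q8] at e1
    have hL1 : L 1 = 0 := by nlinarith [e1]
    funext j
    fin_cases j <;>
      simp only [Fin.isValue] <;>
      first
        | (show L 0 = (0:ℚ); rw [q0, hL1]; ring)
        | (show L 1 = (0:ℚ); exact hL1)
        | (show L 2 = (0:ℚ); rw [q2]; exact hL1)
        | (show L 3 = (0:ℚ); rw [q3]; exact hL1)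
        | (show L 4 = (0:ℚ); rw [q4]; exact hL1)
        | (show L 5 = (0:ℚ); rw [q5]; exact hL1)
        | (show L 6 = (0:ℚ); rw [q6]; exact hL1)
        | (show L 7 = (0:ℚ); rw [q7]; exact hL1)
        | (show L 8 = (0:ℚ); rw [q8]; exact hL1)
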